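/- arXiv:math/0401167 — 4 statements merged into one kernel-verified Lean document; each statement's English description precedes it below -/
import Mathlib

section
/- Let d ≥ k > 0 be integers, K = {1,…,k}, and μ : K → ℕ. In the polynomial ring ℤ[L], the identity ∑_{I ⊊ K} L^{d-k} · ∏_{i ∈ K \ I} (L^{μ_i + 1} - 1) + (L^{d-k} - 1) = L^{(∑_{j ∈ K} (μ_j + 1)) + d - k} - 1 holds, where the first sum is over all proper subsets I of K. -/
open Polynomial

theorem simplex_lemma_polynomial (d k : ℕ) (hk : 0 < k) (hdk : k ≤ d)
    (μ : ℕ → ℕ) :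
    ∑ I ∈ (Finset.range k).powerset.filter (· ≠ Finset.range k),
        (X : ℤ[X]) ^ (d - k) * ∏ i ∈ Finset.range k \ I, (X ^ (μ i + 1) - 1)
      + ((X : ℤ[X]) ^ (d - k) - 1)
    = X ^ ((∑ j ∈ Finset.range k, (μ j + 1)) + d - k) - 1 := by
  set S := Finset.range k with hS
  have hfull : ∑ I ∈ S.powerset, ∏ i ∈ S \ I, ((X : ℤ[X]) ^ (μ i + 1) - 1)
      = X ^ (∑ j ∈ S, (μ j + 1)) := by
    have h := Finset.prod_add (fun i => (1 : ℤ[X])) (fun i => (X : ℤ[X]) ^ (μ i + 1) - 1) S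
    simp only [Finset.prod_const_one, one_mul] at h
    have h2 : ∏ i ∈ S, ((1 : ℤ[X]) + (X ^ (μ i + 1) - 1)) = ∏ i ∈ S, (X : ℤ[X]) ^ (μ i + 1) := by
      apply Finset.prod_congr rfl; intro i _; ring
    rw [h2, Finset.prod_pow_eq_pow_sum] at h
    · rw [← h]
  have hmem : S ∈ S.powerset := Finset.mem_powerset_self S
  have hsplit : ∑ I ∈ S.powerset.filter (· ≠ S), ∏ i ∈ S \ I, ((X : ℤ[X]) ^ (μ i + 1) - 1)
      = X ^ (∑ j ∈ S, (μ j + 1)) - 1 := by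
    have := Finset.sum_filter_add_sum_filter_not S.powerset (· ≠ S)
      (fun I => ∏ i ∈ S \ I, ((X : ℤ[X]) ^ (μ i + 1) - 1))
    have hnot : S.powerset.filter (fun I => ¬ I ≠ S) = {S} := by
      ext I
      simp only [Finset.mem_filter, Finset.mem_powerset, not_not, Finset.mem_singleton]
      constructor
      · rintro ⟨_, rfl⟩; rfl
      · rintro rfl; exact ⟨le_refl _, rfl⟩
    rw [hnot, Finset.sum_singleton, Finset.sdiff_self, Finset.prod_empty, hfull] at this
    linear_combination this
  rw [← Finset.mul_sum, hsplit]
  have hexp : (∑ j ∈ S, (μ j + 1)) + d - k = (∑ j ∈ S, (μ j + 1)) + (d - k) := by omega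
  rw [hexp, pow_add]
  ring
end

section
/- Let d ≥ k > 0 be integers, K a finite set of cardinality k, μ : K → ℕ, and set μ₀ = (∑_{j∈K} μ_j) + d - 1. In the field of rational functions ℚ(L), define p(m) = (L^{m+1} - 1)/(L - 1), and define h_I = (L-1)^{k-|I|} L^{d-k}/(L-1) for subsets I ⊊ K, and h_K = (L^{d-k} - 1)/(L-1). Then ∑_{I ⊆ K} h_I / (p(μ₀) · ∏_{i∈I} p(μ_i)) = 1 / ∏_{j∈K} p(μ_j). -/
/-!
Clearing the denominator `p(μ₀) ∏_{j ∈ K} p(μ_j)` reduces the claim to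
`∑_I h_I ∏_{j ∈ K \ I} p(μ_j) = p(μ₀)`. After multiplying by `L - 1`, the term of `I` becomes
`L^{d-k} ∏_{j ∈ K \ I} (L^{μ_j+1} - 1)`, minus `1` when `I = K`, and the expansion
`∏_j f_j = ∑_I ∏_{j ∈ K \ I} (f_j - 1)` sums these to `L^{d-k+∑(μ_j+1)} - 1 = L^{μ₀+1} - 1`.
-/

open RatFunc Finset

theorem Finset.sum_powerset_prod_sdiff_sub_one {α R : Type*} [DecidableEq α] [CommRing R]
    (K : Finset α) (f : α → R) :
    ∑ I ∈ K.powerset, ∏ j ∈ K \ I, (f j - 1) = ∏ j ∈ K, f j := by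
  simpa using (prod_add (fun _ => (1 : R)) (fun j => f j - 1) K).symm

theorem Finset.sum_powerset_div_mul_prod_eq_one_div_prod {α F : Type*} [DecidableEq α] [Field F]
    (K : Finset α) (h : Finset α → F) (q : α → F) {c : F} (hq : ∀ j ∈ K, q j ≠ 0) (hc : c ≠ 0)
    (hsum : ∑ I ∈ K.powerset, h I * ∏ j ∈ K \ I, q j = c) :
    ∑ I ∈ K.powerset, h I / (c * ∏ i ∈ I, q i) = 1 / ∏ j ∈ K, q j := by
  have hK : ∏ j ∈ K, q j ≠ 0 := prod_ne_zero_iff.mpr hq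
  have common_denominator : ∀ I ∈ K.powerset,
      h I / (c * ∏ i ∈ I, q i) = h I * (∏ j ∈ K \ I, q j) / (c * ∏ j ∈ K, q j) := by
    intro I hI
    have hIK := mem_powerset.mp hI
    have hI : ∏ i ∈ I, q i ≠ 0 := prod_ne_zero_iff.mpr fun j hj => hq j (hIK hj)
    rw [div_eq_div_iff (mul_ne_zero hc hI) (mul_ne_zero hc hK), ← prod_sdiff hIK]
    ring
  rw [sum_congr rfl common_denominator, ← sum_div, hsum, ← div_div, div_self hc]

section Classes

variable {α F : Type*} [DecidableEq α] [Field F] {L : F}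

/-- `[ℙ^m] = 1 + L + ⋯ + L^m`, written as the quotient used in the paper. -/
def projectiveSpaceClass (L : F) (m : ℕ) : F := (L ^ (m + 1) - 1) / (L - 1)

/-- `stratumClass L (d - k) K I` is the paper's `h_I`, for `#K = k`. -/
def stratumClass (L : F) (n : ℕ) (K I : Finset α) : F :=
  if I = K then (L ^ n - 1) / (L - 1) else (L - 1) ^ (#K - #I) * L ^ n / (L - 1)

theorem sub_one_mul_projectiveSpaceClass (hL : L - 1 ≠ 0) (m : ℕ) :
    (L - 1) * projectiveSpaceClass L m = L ^ (m + 1) - 1 :=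
  mul_div_cancel₀ _ hL

theorem sub_one_mul_stratumClass_mul_prod (hL : L - 1 ≠ 0) (n : ℕ) {K I : Finset α}
    (hIK : I ⊆ K) (μ : α → ℕ) :
    (L - 1) * (stratumClass L n K I * ∏ j ∈ K \ I, projectiveSpaceClass L (μ j)) =
      L ^ n * ∏ j ∈ K \ I, (L ^ (μ j + 1) - 1) - if I = K then 1 else 0 := by
  unfold stratumClass
  split_ifs with hI
  · subst hI
    simp only [sdiff_self, bot_eq_empty, prod_empty, mul_one]
    field_simp
  · have hprod : ∏ j ∈ K \ I, (L ^ (μ j + 1) - 1) =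
        (L - 1) ^ (#K - #I) * ∏ j ∈ K \ I, projectiveSpaceClass L (μ j) := by
      rw [← card_sdiff_of_subset hIK, ← prod_const, ← prod_mul_distrib]
      exact prod_congr rfl fun j _ => (sub_one_mul_projectiveSpaceClass hL (μ j)).symm
    rw [hprod]
    field_simp
    ring

theorem sum_stratumClass_mul_prod (hL : L - 1 ≠ 0) (n : ℕ) (K : Finset α) (μ : α → ℕ) :
    ∑ I ∈ K.powerset, stratumClass L n K I * ∏ j ∈ K \ I, projectiveSpaceClass L (μ j) =
      (L ^ (n + ∑ j ∈ K, (μ j + 1)) - 1) / (L - 1) := by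
  rw [eq_div_iff hL, mul_comm, mul_sum,
    sum_congr rfl fun I hI => sub_one_mul_stratumClass_mul_prod hL n (mem_powerset.mp hI) μ,
    sum_sub_distrib, ← mul_sum, sum_powerset_prod_sdiff_sub_one, sum_ite_eq' _ _ (fun _ => 1),
    if_pos (mem_powerset_self K), prod_pow_eq_pow_sum, pow_add]

end Classes

theorem RatFunc.X_pow_sub_one_ne_zero {K : Type*} [Field K] {n : ℕ} (hn : n ≠ 0) :
    (X : RatFunc K) ^ n - 1 ≠ 0 := by
  simpa using algebraMap_ne_zero (Polynomial.X_pow_sub_C_ne_zero (Nat.pos_of_ne_zero hn) (1 : K))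

theorem RatFunc.projectiveSpaceClass_X_ne_zero {K : Type*} [Field K] (m : ℕ) :
    projectiveSpaceClass (X : RatFunc K) m ≠ 0 :=
  div_ne_zero (X_pow_sub_one_ne_zero m.succ_ne_zero) (by simpa using X_pow_sub_one_ne_zero one_ne_zero)

theorem simplexcor_ratfunc {α : Type*} [DecidableEq α]
    (d k : ℕ) (hk : 0 < k) (hdk : k ≤ d) (K : Finset α) (hK : K.card = k)
    (μ : α → ℕ) (μ₀ : ℕ) (hμ₀ : μ₀ = (∑ j ∈ K, μ j) + d - 1)
    (p : ℕ → RatFunc ℚ) (hp : ∀ m, p m = ((X : RatFunc ℚ) ^ (m + 1) - 1) / (X - 1))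
    (h : Finset α → RatFunc ℚ)
    (hh : ∀ I ∈ K.powerset, h I =
      if I = K then ((X : RatFunc ℚ) ^ (d - k) - 1) / (X - 1)
      else ((X : RatFunc ℚ) - 1) ^ (k - I.card) * X ^ (d - k) / (X - 1)) :
    ∑ I ∈ K.powerset, h I / (p μ₀ * ∏ i ∈ I, p (μ i))
      = 1 / ∏ j ∈ K, p (μ j) := by
  obtain rfl : p = projectiveSpaceClass X := funext hp
  subst hK
  have hX : (X : RatFunc ℚ) - 1 ≠ 0 := by simpa using X_pow_sub_one_ne_zero one_ne_zero
  have hexp : d - #K + ∑ j ∈ K, (μ j + 1) = μ₀ + 1 := by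
    rw [sum_add_distrib, sum_const, smul_eq_mul, mul_one, hμ₀]
    omega
  refine sum_powerset_div_mul_prod_eq_one_div_prod K h _
    (fun j _ => projectiveSpaceClass_X_ne_zero _) (projectiveSpaceClass_X_ne_zero _) ?_
  have hstrata : ∀ I ∈ K.powerset, h I = stratumClass X (d - #K) K I := hh
  rw [sum_congr rfl fun I hI => by rw [hstrata I hI], sum_stratumClass_mul_prod hX, hexp]
  rfl
end

section
/- Let q be a prime power, d ≥ k > 0, K = {1,…,k}, μ : K → ℕ, and μ₀ = ∑_{j∈K} μ_j + d - 1. With H_I° the strata of the k coordinate hyperplanes in ℙ^{d-1}(F_q) as above, and writing [ℙ^m]_q = (q^{m+1}-1)/(q-1) for the number of F_q-points of ℙ^m, one has ∑_{I ⊆ K} |H_I°| · ∏_{i ∈ K\I} [ℙ^{μ_i}]_q = [ℙ^{μ₀}]_q. -/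
open Projectivization


lemma card_proj_mul {F : Type*} [Field F] (V : Type*) [AddCommGroup V] [Module F V]
    (Q : V → Prop) (hQ : ∀ (a : Fˣ) (v : V), Q (a • v) ↔ Q v) :
    Nat.card {x : Projectivization F V | Q x.rep} * Nat.card Fˣ
      = Nat.card {v : V | v ≠ 0 ∧ Q v} := by
  rw [← Nat.card_prod]
  refine Nat.card_eq_of_bijective
    (fun p => ⟨p.2 • (p.1 : Projectivization F V).rep, ?_, ?_⟩) ⟨?_, ?_⟩
  · simp [Units.smul_def, smul_eq_zero, Units.ne_zero, Projectivization.rep_nonzero]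
  · exact (hQ p.2 _).mpr p.1.2
  · rintro ⟨⟨x, hx⟩, a⟩ ⟨⟨y, hy⟩, b⟩ h
    simp only [Subtype.mk_eq_mk] at h
    have hxy : x = y := by
      have h1 : ((b⁻¹ * a : Fˣ)) • x.rep = y.rep := by
        rw [mul_smul, h, ← mul_smul]; simp
      have := (Projectivization.mk_eq_mk_iff F y.rep x.rep y.rep_nonzero
        x.rep_nonzero).mpr ⟨b⁻¹ * a, h1⟩
      rwa [Projectivization.mk_rep, Projectivization.mk_rep, eq_comm] at this
    subst hxy
    have hab : a = b := by
      have h2 : ((a : F) - (b : F)) • x.rep = 0 := by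
        rw [sub_smul, sub_eq_zero]; simpa [Units.smul_def] using h
      rcases smul_eq_zero.mp h2 with h3 | h3
      · exact Units.ext (by linear_combination h3)
      · exact absurd h3 x.rep_nonzero
    simp [hab]
  · rintro ⟨v, hv, hQv⟩
    obtain ⟨a, ha⟩ := Projectivization.exists_smul_eq_mk_rep F v hv
    refine ⟨⟨⟨Projectivization.mk F v hv, ?_⟩, a⁻¹⟩, ?_⟩
    · show Q _
      rw [← ha]; exact (hQ a v).mpr hQv
    · simp only [Subtype.mk_eq_mk]
      rw [← ha, ← mul_smul]; simp

lemma card_Kd (d k : ℕ) (hdk : k ≤ d) :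
    (Finset.univ.filter (fun i : Fin d => (i : ℕ) < k)).card = k := by
  have : (Finset.univ.filter (fun i : Fin d => (i : ℕ) < k))
      = Finset.map (Fin.castLEEmb hdk) Finset.univ := by
    ext i
    simp only [Finset.mem_filter, Finset.mem_univ, true_and, Finset.mem_map,
      Fin.coe_castLEEmb]
    constructor
    · intro h; exact ⟨⟨i, h⟩, rfl⟩
    · rintro ⟨j, -, rfl⟩; simp
  rw [this, Finset.card_map, Finset.card_univ, Fintype.card_fin]

lemma card_vec {F : Type*} [Field F] [Fintype F] [DecidableEq F] {d k : ℕ} (hdk : k ≤ d)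
    (Kd : Finset (Fin d)) (hKd : Kd = Finset.univ.filter (fun i : Fin d => (i : ℕ) < k))
    (I : Finset (Fin d)) (hI : I ⊆ Kd) :
    Nat.card {v : Fin d → F | v ≠ 0 ∧ ∀ i : Fin d, (i : ℕ) < k → (v i = 0 ↔ i ∈ I)}
      + (if I = Kd then 1 else 0)
    = (Fintype.card F - 1) ^ ((Kd \ I).card) * Fintype.card F ^ (d - k) := by
  classical
  have hT : Nat.card {v : Fin d → F | ∀ i : Fin d, (i : ℕ) < k → (v i = 0 ↔ i ∈ I)}
      = (Fintype.card F - 1) ^ ((Kd \ I).card) * Fintype.card F ^ (d - k) := by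
    have e0 : Nat.card {v : Fin d → F | ∀ i : Fin d, (i : ℕ) < k → (v i = 0 ↔ i ∈ I)}
        = Nat.card {f : Fin d → F // ∀ i : Fin d, (i : ℕ) < k → (f i = 0 ↔ i ∈ I)} := rfl
    rw [e0, Nat.card_congr (Equiv.subtypePiEquivPi
        (p := fun (i : Fin d) (t : F) => (i : ℕ) < k → (t = 0 ↔ i ∈ I))), Nat.card_pi]
    have hterm : ∀ i : Fin d, Nat.card {t : F // (i : ℕ) < k → (t = 0 ↔ i ∈ I)}
        = if (i : ℕ) < k then (if i ∈ I then 1 else Fintype.card F - 1)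
          else Fintype.card F := by
      intro i
      by_cases hik : (i : ℕ) < k
      · by_cases hiI : i ∈ I
        · rw [if_pos hik, if_pos hiI]
          have he : Nat.card {t : F // (i : ℕ) < k → (t = 0 ↔ i ∈ I)}
              = Nat.card {t : F // t = 0} :=
            Nat.card_congr (Equiv.subtypeEquivRight (fun t => by simp [hik, hiI]))
          rw [he, Nat.card_eq_fintype_card, Fintype.card_subtype_eq (0 : F)]
        · rw [if_pos hik, if_neg hiI]
          have he : Nat.card {t : F // (i : ℕ) < k → (t = 0 ↔ i ∈ I)}
              = Nat.card {t : F // ¬ (t = 0)} :=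
            Nat.card_congr (Equiv.subtypeEquivRight (fun t => by simp [hik, hiI]))
          rw [he, Nat.card_eq_fintype_card, Fintype.card_subtype_compl,
            Fintype.card_subtype_eq (0 : F)]
      · rw [if_neg hik]
        have he : Nat.card {t : F // (i : ℕ) < k → (t = 0 ↔ i ∈ I)} = Nat.card F :=
          Nat.card_congr (Equiv.subtypeUnivEquiv (fun t h => absurd h hik))
        rw [he, Nat.card_eq_fintype_card]
    rw [Finset.prod_congr rfl (fun i _ => hterm i)]
    rw [← Finset.prod_filter_mul_prod_filter_not Finset.univ (fun i : Fin d => (i : ℕ) < k)]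
    have h1 : ∏ i ∈ Finset.univ.filter (fun i : Fin d => (i : ℕ) < k),
        (if (i : ℕ) < k then (if i ∈ I then 1 else Fintype.card F - 1) else Fintype.card F)
        = (Fintype.card F - 1) ^ ((Kd \ I).card) := by
      rw [← hKd]
      rw [Finset.prod_congr rfl (fun i hi => if_pos (by rw [hKd] at hi; simpa using hi))]
      rw [← Finset.prod_sdiff hI]
      rw [Finset.prod_congr rfl (fun i hi => if_neg (Finset.mem_sdiff.mp hi).2),
        Finset.prod_const]
      rw [Finset.prod_congr rfl (fun i hi => if_pos hi), Finset.prod_const, one_pow, mul_one]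
    have h2 : ∏ i ∈ Finset.univ.filter (fun i : Fin d => ¬ (i : ℕ) < k),
        (if (i : ℕ) < k then (if i ∈ I then 1 else Fintype.card F - 1) else Fintype.card F)
        = Fintype.card F ^ (d - k) := by
      rw [Finset.prod_congr rfl
          (fun i hi => if_neg (by simpa using (Finset.mem_filter.mp hi).2)),
        Finset.prod_const]
      congr 1
      have := Finset.card_filter_add_card_filter_not
        (s := (Finset.univ : Finset (Fin d))) (p := fun i : Fin d => (i : ℕ) < k)
      rw [card_Kd d k hdk] at this
      simp only [Finset.card_univ, Fintype.card_fin] at this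
      exact Nat.eq_sub_of_add_eq' this
    rw [h1, h2]
  have hz : (0 : Fin d → F) ∈ {v : Fin d → F | ∀ i : Fin d, (i : ℕ) < k → (v i = 0 ↔ i ∈ I)}
      ↔ I = Kd := by
    constructor
    · intro h
      apply Finset.Subset.antisymm hI
      intro i hi
      have hik : (i : ℕ) < k := by rw [hKd] at hi; simpa using hi
      exact (h i hik).mp rfl
    · intro h i hik
      rw [h, hKd]
      simp [hik]
  have hsets : {v : Fin d → F | v ≠ 0 ∧ ∀ i : Fin d, (i : ℕ) < k → (v i = 0 ↔ i ∈ I)}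
      = {v : Fin d → F | ∀ i : Fin d, (i : ℕ) < k → (v i = 0 ↔ i ∈ I)} \ {0} := by
    ext v
    simp only [Set.mem_setOf_eq, Set.mem_diff, Set.mem_singleton_iff]
    tauto
  rw [hsets, Nat.card_coe_set_eq]
  by_cases h : I = Kd
  · rw [if_pos h, Set.ncard_diff_singleton_add_one (hz.mpr h), ← Nat.card_coe_set_eq, hT]
  · rw [if_neg h, Set.diff_singleton_eq_self (fun hm => h (hz.mp hm)), add_zero,
      ← Nat.card_coe_set_eq, hT]

/-- Finite-field realization of Aluffi's simplex lemma: summing the point counts of the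
strata of the `k` coordinate hyperplanes in `ℙ^{d-1}(F_q)` against products of point counts
of projective spaces `[ℙ^{μ_i}]_q` yields `[ℙ^{μ₀}]_q`. -/
theorem sum_strata_card_eq_proj_card
    (q d k : ℕ) (hq : IsPrimePow q) (hk : 0 < k) (hdk : k ≤ d)
    (F : Type*) [Field F] [Fintype F] (hF : Fintype.card F = q)
    (Kd : Finset (Fin d)) (hKd : Kd = Finset.univ.filter (fun i : Fin d => (i : ℕ) < k))
    (μ : Fin d → ℕ) (μ₀ : ℕ) (hμ₀ : μ₀ = (∑ j ∈ Kd, μ j) + d - 1) :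
    ∑ I ∈ Kd.powerset,
        (Nat.card {x : Projectivization F (Fin d → F) |
            ∀ i : Fin d, (i : ℕ) < k → (x.rep i = 0 ↔ i ∈ I)} : ℚ) *
          ∏ i ∈ Kd \ I, (((q : ℚ) ^ (μ i + 1) - 1) / ((q : ℚ) - 1))
      = ((q : ℚ) ^ (μ₀ + 1) - 1) / ((q : ℚ) - 1) := by
  classical
  have hq2 : 2 ≤ q := hq.two_le
  have hq1 : ((q : ℚ) - 1) ≠ 0 := by
    have : (2 : ℚ) ≤ (q : ℚ) := by exact_mod_cast hq2
    linarith
  have key : ∀ I ∈ Kd.powerset,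
      (Nat.card {x : Projectivization F (Fin d → F) |
          ∀ i : Fin d, (i : ℕ) < k → (x.rep i = 0 ↔ i ∈ I)} : ℚ) * ((q : ℚ) - 1)
        = ((q : ℚ) - 1) ^ ((Kd \ I).card) * (q : ℚ) ^ (d - k)
          - (if I = Kd then 1 else 0) := by
    intro I hImem
    have hI : I ⊆ Kd := Finset.mem_powerset.mp hImem
    have hfib := card_proj_mul (F := F) (Fin d → F)
      (fun v => ∀ i : Fin d, (i : ℕ) < k → (v i = 0 ↔ i ∈ I))
      (by
        intro a v
        have key0 : ∀ i : Fin d, (a • v) i = 0 ↔ v i = 0 := by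
          intro i
          simp [Units.smul_def]
        constructor <;> intro h i hik
        · rw [← key0 i]; exact h i hik
        · rw [key0 i]; exact h i hik)
    have hu : Nat.card Fˣ = q - 1 := by
      rw [Nat.card_eq_fintype_card, Fintype.card_units, hF]
    have hvec := card_vec (F := F) hdk Kd hKd I hI
    rw [hF] at hvec
    rw [hu] at hfib
    have hfib2 : Nat.card {x : Projectivization F (Fin d → F) |
          ∀ i : Fin d, (i : ℕ) < k → (x.rep i = 0 ↔ i ∈ I)} * (q - 1)
        = Nat.card {v : Fin d → F | v ≠ 0 ∧
            ∀ i : Fin d, (i : ℕ) < k → (v i = 0 ↔ i ∈ I)} := hfib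
    have hnat : Nat.card {x : Projectivization F (Fin d → F) |
          ∀ i : Fin d, (i : ℕ) < k → (x.rep i = 0 ↔ i ∈ I)} * (q - 1)
        + (if I = Kd then 1 else 0)
        = (q - 1) ^ ((Kd \ I).card) * q ^ (d - k) := by
      rw [hfib2]; exact hvec
    have hcq : ((q - 1 : ℕ) : ℚ) = (q : ℚ) - 1 := Nat.cast_sub (by linarith)
    by_cases h : I = Kd
    · rw [if_pos h] at hnat ⊢
      have hc := congrArg (Nat.cast : ℕ → ℚ) hnat
      push_cast at hc
      rw [hcq] at hc
      linarith
    · rw [if_neg h] at hnat ⊢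
      rw [add_zero] at hnat
      have hc := congrArg (Nat.cast : ℕ → ℚ) hnat
      push_cast at hc
      rw [hcq] at hc
      linarith
  have term : ∀ I ∈ Kd.powerset,
      (Nat.card {x : Projectivization F (Fin d → F) |
          ∀ i : Fin d, (i : ℕ) < k → (x.rep i = 0 ↔ i ∈ I)} : ℚ) *
        ∏ i ∈ Kd \ I, (((q : ℚ) ^ (μ i + 1) - 1) / ((q : ℚ) - 1))
      = ((q : ℚ) ^ (d - k) * ∏ i ∈ Kd \ I, ((q : ℚ) ^ (μ i + 1) - 1)
          - (if I = Kd then 1 else 0)) / ((q : ℚ) - 1) := by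
    intro I hImem
    have hkey := key I hImem
    have hprod : ∏ i ∈ Kd \ I, (((q : ℚ) ^ (μ i + 1) - 1) / ((q : ℚ) - 1))
        = (∏ i ∈ Kd \ I, ((q : ℚ) ^ (μ i + 1) - 1))
            / ((q : ℚ) - 1) ^ ((Kd \ I).card) := by
      rw [Finset.prod_div_distrib, Finset.prod_const]
    rw [hprod]
    have hN : (Nat.card {x : Projectivization F (Fin d → F) |
          ∀ i : Fin d, (i : ℕ) < k → (x.rep i = 0 ↔ i ∈ I)} : ℚ)
        = (((q : ℚ) - 1) ^ ((Kd \ I).card) * (q : ℚ) ^ (d - k)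
          - (if I = Kd then 1 else 0)) / ((q : ℚ) - 1) := by
      rw [eq_div_iff hq1]; exact hkey
    rw [hN]
    by_cases h : I = Kd
    · subst h
      simp only [Finset.sdiff_self, Finset.card_empty, Finset.prod_empty, pow_zero, if_pos rfl]
      ring
    · simp only [if_neg h]
      have hp : ((q : ℚ) - 1) ^ ((Kd \ I).card) ≠ 0 := pow_ne_zero _ hq1
      field_simp
      ring
  rw [Finset.sum_congr rfl term, ← Finset.sum_div]
  congr 1
  have hsum : ∑ I ∈ Kd.powerset, ((q : ℚ) ^ (d - k) * ∏ i ∈ Kd \ I, ((q : ℚ) ^ (μ i + 1) - 1)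
      - (if I = Kd then 1 else 0))
      = (q : ℚ) ^ (d - k) * (∑ I ∈ Kd.powerset, ∏ i ∈ Kd \ I, ((q : ℚ) ^ (μ i + 1) - 1))
        - 1 := by
    rw [Finset.sum_sub_distrib, ← Finset.mul_sum]
    congr 1
    rw [Finset.sum_ite_eq' Kd.powerset Kd (fun _ => (1 : ℚ)),
      if_pos (Finset.mem_powerset_self Kd)]
  rw [hsum]
  have hpa : ∑ I ∈ Kd.powerset, ∏ i ∈ Kd \ I, ((q : ℚ) ^ (μ i + 1) - 1)
      = ∏ i ∈ Kd, ((1 : ℚ) + ((q : ℚ) ^ (μ i + 1) - 1)) := by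
    rw [Finset.prod_add]
    apply Finset.sum_congr rfl
    intro I hI
    simp
  rw [hpa]
  have hpe : ∏ i ∈ Kd, ((1 : ℚ) + ((q : ℚ) ^ (μ i + 1) - 1))
      = (q : ℚ) ^ (∑ i ∈ Kd, (μ i + 1)) := by
    rw [← Finset.prod_pow_eq_pow_sum]
    apply Finset.prod_congr rfl
    intro i _
    ring
  rw [hpe, ← pow_add]
  congr 2
  have hKdcard : Kd.card = k := by rw [hKd]; exact card_Kd d k hdk
  rw [Finset.sum_add_distrib, Finset.sum_const, hKdcard, smul_eq_mul, mul_one]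
  omega
end

section
/- Let d ≥ k > 0 be integers, K a finite set with |K| = k, μ : K → ℕ, and μ₀ = ∑_{j∈K} μ_j + d - 1. Define rational numbers e_I for subsets I ⊆ K by: e_I = 0 if |I| < k - 1, e_I = 1 if |I| = k - 1, and e_K = d - k. Then ∑_{I ⊆ K} e_I / ((μ₀ + 1) · ∏_{i ∈ I} (μ_i + 1)) = 1 / ∏_{j ∈ K} (μ_j + 1), as an identity of rational numbers. -/
/-! Only `I = K`, with weight `d - k`, and the `k` faces `I = K.erase j`, with weight `1`,
contribute. Since `∏_{K.erase j} = ∏_K / (μ_j + 1)`, the left side is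
`((d - k) + ∑_j (μ_j + 1)) / ((μ₀ + 1) ∏_K)`, and the numerator is `μ₀ + 1`. -/

open Finset

theorem Finset.sum_powerset_eq_add_sum_erase {α β : Type*} [DecidableEq α] [AddCommMonoid β]
    (s : Finset α) (f : Finset α → β) (hf : ∀ t ⊆ s, #t + 1 < #s → f t = 0) :
    ∑ t ∈ s.powerset, f t = f s + ∑ a ∈ s, f (s.erase a) := by
  have hs : s ∉ s.image s.erase := by simp
  rw [← sum_image s.erase_injOn, ← sum_insert hs]
  refine (sum_subset (fun t ht => ?_) fun t ht hnt => hf t (mem_powerset.1 ht) ?_).symm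
  · rcases mem_insert.1 ht with rfl | ht
    · exact mem_powerset_self t
    · obtain ⟨a, -, rfl⟩ := mem_image.1 ht
      exact mem_powerset.2 (erase_subset a s)
  · have hts : t ⊂ s := ssubset_of_subset_of_ne (mem_powerset.1 ht) (by rintro rfl; simp at hnt)
    by_contra! hcard
    have hsucc : #t + 1 = #s := by have := card_lt_card hts; omega
    obtain ⟨a, ha, rfl⟩ := exists_eq_insert_iff.2 ⟨hts.subset, hsucc⟩
    simp [erase_insert ha] at hnt

theorem Finset.prod_erase_eq_div₀ {α K : Type*} [DecidableEq α] [CommGroupWithZero K]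
    {s : Finset α} {a : α} (g : α → K) (ha : a ∈ s) (hg : g a ≠ 0) :
    ∏ i ∈ s.erase a, g i = (∏ i ∈ s, g i) / g a := by
  rw [← mul_prod_erase s g ha, mul_div_cancel_left₀ _ hg]

theorem euler_char_simplex_identity {α : Type*} [DecidableEq α]
    (K : Finset α) (k d : ℕ) (hk : 0 < k) (hdk : k ≤ d) (hK : K.card = k)
    (μ : α → ℕ) (μ₀ : ℕ) (hμ₀ : μ₀ = (∑ j ∈ K, μ j) + d - 1)
    (e : Finset α → ℚ)
    (he : ∀ I ∈ K.powerset,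
      e I = if I.card < k - 1 then 0 else if I.card = k - 1 then 1 else (d - k : ℚ)) :
    ∑ I ∈ K.powerset, e I / ((μ₀ + 1) * ∏ i ∈ I, ((μ i : ℚ) + 1))
      = 1 / ∏ j ∈ K, ((μ j : ℚ) + 1) := by
  have hμ : ∀ i, (μ i : ℚ) + 1 ≠ 0 := fun i => by positivity
  have hμ₀ : (μ₀ : ℚ) + 1 = (d - k : ℚ) + ∑ j ∈ K, ((μ j : ℚ) + 1) := by
    rw [sum_add_distrib, sum_const, hK, nsmul_one, ← Nat.cast_sum, hμ₀,
      Nat.cast_sub (by omega)]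
    push_cast
    ring
  have heK : e K = d - k := by
    rw [he K (mem_powerset_self K), hK, if_neg (by omega), if_neg (by omega)]
  have heErase : ∀ j ∈ K, e (K.erase j) = 1 := fun j hj => by
    rw [he _ (mem_powerset.2 (erase_subset j K)), card_erase_of_mem hj, hK,
      if_neg (lt_irrefl _), if_pos rfl]
  rw [sum_powerset_eq_add_sum_erase K _ fun I hI hcard => by
    rw [he I (mem_powerset.2 hI), if_pos (by omega), zero_div]]
  rw [heK, sum_congr rfl fun j hj => by rw [heErase j hj, prod_erase_eq_div₀ _ hj (hμ j)]]
  set P := ∏ j ∈ K, ((μ j : ℚ) + 1)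
  calc (d - k : ℚ) / ((μ₀ + 1) * P) + ∑ j ∈ K, 1 / ((μ₀ + 1) * (P / (μ j + 1)))
      = ((d - k : ℚ) + ∑ j ∈ K, ((μ j : ℚ) + 1)) / ((μ₀ + 1) * P) := by
        rw [add_div, sum_div]
        congr 1
        exact sum_congr rfl fun j _ => by field_simp [hμ j]
    _ = 1 / P := by
        rw [← hμ₀]
        field_simp
end
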